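/- Each Jucys–Murphy element l_r (r ∈ [1,n]) commutes with every element of the subalgebra A^{⊗n} of H_n(A). -/

import Mathlib

/-!
Statement 6 (Lemma `JMcent`): each Jucys–Murphy element
`l_r = -∑_{t<r} Δ_{t,r}·(t,r)` of `H_n(A)` commutes with every element of the
subalgebra `A^{⊗n}` of `H_n(A)`.
-/

open scoped TensorProduct


noncomputable section

/-- The distinguished element `Δ(1)` of a graded symmetric algebra. -/
noncomputable def DeltaElem (k A : Type*) [CommRing k] [Ring A] [Algebra k A]
    [Module.Free k A] [Module.Finite k A]
    (φ : A ≃ₗ[k] Module.Dual k A) : A ⊗[k] A :=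
  TensorProduct.map φ.symm.toLinearMap φ.symm.toLinearMap
    ((TensorProduct.dualDistribEquiv k A A).symm
      ((LinearMap.mul' k A).dualMap (φ 1)))

variable (k A : Type*) [CommRing k] [Ring A] [Algebra k A] (n : ℕ)

/-- The `n`-fold tensor power `A^{⊗ n}`. -/
abbrev TPow := PiTensorProduct k (fun _ : Fin n => A)

/-- The place permutation action of `σ ∈ S_n` on `A^{⊗n}`:
`^σ(v_1 ⊗ ⋯ ⊗ v_n) = v_{σ⁻¹ 1} ⊗ ⋯ ⊗ v_{σ⁻¹ n}`. -/
noncomputable def permAct (σ : Equiv.Perm (Fin n)) : TPow k A n ≃ₗ[k] TPow k A n :=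
  PiTensorProduct.reindex k (fun _ : Fin n => A) σ

/-- The map `ι_{t,u} : A ⊗ A → A^{⊗n}` placing the two factors in slots `t` and `u`
(`t ≠ u`) and `1`'s elsewhere. -/
noncomputable def slotEmb (t u : Fin n) (h : t ≠ u) : A ⊗[k] A →ₗ[k] TPow k A n :=
  TensorProduct.lift <| LinearMap.mk₂ k
    (fun a b => PiTensorProduct.tprod k
        (Function.update (Function.update (fun _ : Fin n => (1 : A)) t a) u b))
    (by
      intro a a' b
      try dsimp only
      rw [Function.update_comm h, Function.update_comm h, Function.update_comm h,
        MultilinearMap.map_update_add])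
    (by
      intro c a b
      try dsimp only
      rw [Function.update_comm h, Function.update_comm h,
        MultilinearMap.map_update_smul])
    (by intro a b b'; (try dsimp only); rw [MultilinearMap.map_update_add])
    (by intro c a b; (try dsimp only); rw [MultilinearMap.map_update_smul])

/-- `Δ_{t,u} := ι_{t,u}(Δ(1)) ∈ A^{⊗n}`. -/
noncomputable def DeltaSlot (D : A ⊗[k] A) (t u : Fin n) (h : t ≠ u) : TPow k A n :=
  slotEmb k A n t u h D

/-- Generators of the rank `n` affinization `H_n(A)`. -/
inductive AffGen : Type _
  | z : Fin n → AffGen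
  | t : TPow k A n → AffGen
  | s : Equiv.Perm (Fin n) → AffGen

variable {k A}

open FreeAlgebra in
/-- The defining relations of the rank `n` affinization `H_n(A)` (relative to a
choice of distinguished element `D = Δ(1) ∈ A ⊗ A`): the relations of the free
product `k[z_1,…,z_n] ⋆ A^{⊗n} ⋆ kS_n` together with the commutation relations
(3.4)–(3.6) of Definition 3.3. -/
inductive AffRel (D : A ⊗[k] A) :
    FreeAlgebra k (AffGen k A n) → FreeAlgebra k (AffGen k A n) → Prop
  -- `A^{⊗n}` is a subalgebra
  | t_add (a b : TPow k A n) :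
      AffRel D (ι k (.t (a + b))) (ι k (.t a) + ι k (.t b))
  | t_smul (c : k) (a : TPow k A n) :
      AffRel D (ι k (.t (c • a))) (c • ι k (.t a))
  | t_mul (a b : TPow k A n) :
      AffRel D (ι k (.t (a * b))) (ι k (.t a) * ι k (.t b))
  | t_one : AffRel D (ι k (.t 1)) 1
  -- `k S_n` is a subalgebra
  | s_mul (σ τ : Equiv.Perm (Fin n)) :
      AffRel D (ι k (.s (σ * τ))) (ι k (.s σ) * ι k (.s τ))
  | s_one : AffRel D (ι k (.s 1)) 1
  -- the polynomial generators commute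
  | zz (i j : Fin n) :
      AffRel D (ι k (.z i) * ι k (.z j)) (ι k (.z j) * ι k (.z i))
  -- relation (3.4): `a z_j = z_j a`
  | az (a : TPow k A n) (j : Fin n) :
      AffRel D (ι k (.t a) * ι k (.z j)) (ι k (.z j) * ι k (.t a))
  -- relation (3.5): `s_i a = (^{s_i} a) s_i`
  | sa (i : Fin n) (h : (i : ℕ) + 1 < n) (a : TPow k A n) :
      AffRel D (ι k (.s (Equiv.swap i ⟨i + 1, h⟩)) * ι k (.t a))
        (ι k (.t (permAct k A n (Equiv.swap i ⟨i + 1, h⟩) a)) *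
          ι k (.s (Equiv.swap i ⟨i + 1, h⟩)))
  -- relation (3.6): `s_i z_j - z_{s_i j} s_i = (δ_{i,j} - δ_{i+1,j}) Δ_{i,i+1}`
  | sz (i : Fin n) (h : (i : ℕ) + 1 < n) (j : Fin n) :
      AffRel D (ι k (.s (Equiv.swap i ⟨i + 1, h⟩)) * ι k (.z j))
        (ι k (.z (Equiv.swap i ⟨i + 1, h⟩ j)) * ι k (.s (Equiv.swap i ⟨i + 1, h⟩)) +
          ((if j = i then (1 : k) else 0) - (if j = ⟨i + 1, h⟩ then (1 : k) else 0)) •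
            ι k (.t (DeltaSlot k A n D i ⟨i + 1, h⟩
              (ne_of_lt (Fin.lt_def.mpr (Nat.lt_succ_self _))))))

/-- The rank `n` affinization `H_n(A)` of the symmetric algebra `A`, presented by
generators and relations. -/
abbrev AffAlg (D : A ⊗[k] A) := RingQuot (AffRel (k := k) (A := A) n D)

variable (D : A ⊗[k] A)

/-- The generator `z_i ∈ H_n(A)`. -/
noncomputable def zE (i : Fin n) : AffAlg n D :=
  RingQuot.mkAlgHom k (AffRel n D) (FreeAlgebra.ι k (.z i))

/-- The canonical map `A^{⊗n} → H_n(A)`. -/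
noncomputable def tE : TPow k A n →ₗ[k] AffAlg n D where
  toFun a := RingQuot.mkAlgHom k (AffRel n D) (FreeAlgebra.ι k (.t a))
  map_add' a b := by
    have := RingQuot.mkAlgHom_rel k (AffRel.t_add (D := D) (n := n) a b)
    simpa using this
  map_smul' c a := by
    have := RingQuot.mkAlgHom_rel k (AffRel.t_smul (D := D) (n := n) c a)
    simpa using this

/-- The canonical image of `σ ∈ S_n` in `H_n(A)`. -/
noncomputable def sE (σ : Equiv.Perm (Fin n)) : AffAlg n D :=
  RingQuot.mkAlgHom k (AffRel n D) (FreeAlgebra.ι k (.s σ))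

/-- The canonical map `k S_n → H_n(A)`. -/
noncomputable def gE : MonoidAlgebra k (Equiv.Perm (Fin n)) →ₐ[k] AffAlg n D :=
  MonoidAlgebra.lift k (AffAlg n D) (Equiv.Perm (Fin n))
    { toFun := fun σ => sE n D σ
      map_one' := by
        have := RingQuot.mkAlgHom_rel k (AffRel.s_one (D := D) (n := n))
        simpa [sE] using this
      map_mul' := fun σ τ => by
        have := RingQuot.mkAlgHom_rel k (AffRel.s_mul (D := D) (n := n) σ τ)
        simpa [sE] using this }

/-- The canonical `k`-linear map `k[z_1, …, z_n] → H_n(A)` sending a monomial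
`z^m` to `z_1^{m_1} ⋯ z_n^{m_n}`. -/
noncomputable def zMon : MvPolynomial (Fin n) k →ₗ[k] AffAlg n D :=
  (MvPolynomial.basisMonomials (Fin n) k).constr k
    (fun m => ((List.finRange n).map (fun i => zE n D i ^ m i)).prod)

/-- The underlying `k`-module `V = k[z_1,…,z_n] ⊗ A^{⊗n} ⊗ kS_n`. -/
abbrev AffModV := MvPolynomial (Fin n) k ⊗[k]
  (TPow k A n ⊗[k] MonoidAlgebra k (Equiv.Perm (Fin n)))

/-- The multiplication map `V → H_n(A)`, `f ⊗ a ⊗ w ↦ f a w`. -/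
noncomputable def mulMap : AffModV (k := k) (A := A) n →ₗ[k] AffAlg n D :=
  TensorProduct.lift <| (LinearMap.mul k (AffAlg n D)).compl₁₂ (zMon n D)
    (TensorProduct.lift <| (LinearMap.mul k (AffAlg n D)).compl₁₂ (tE n D)
      (gE n D).toLinearMap)

end

variable {k A : Type*} [CommRing k] [Ring A] [Algebra k A]

/-- The Jucys–Murphy element `l_r := -∑_{t<r} Δ_{t,r} (t,r)` of `H_n(A)`. -/
noncomputable def jmEl (n : ℕ) (D : A ⊗[k] A) (r : Fin n) : AffAlg n D :=
  - ∑ t : Fin n, if h : t < r then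
      tE n D (DeltaSlot k A n D t r (ne_of_lt h)) * sE n D (Equiv.swap t r)
    else 0

/-!
In `H_n(A)` one has `(t,r) a = (^{(t,r)} a) (t,r)`, so it suffices to show
`Δ_{t,r} · ^{(t,r)} a = a · Δ_{t,r}` in `A^{⊗n}`. On a pure tensor this reduces to the identity
`(x ⊗ y) Δ(1) = Δ(1) (y ⊗ x)` in `A ⊗ A`. Pairing both sides with `p ⊗ q` through `φ ⊗ φ`, the
bimodule property of `φ` turns them into `φ 1 (p x q y)` and `φ 1 (y p x q)`, which agree because
`φ 1` is a symmetric trace form.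
-/

section SymmetricForm

variable (φ : A ≃ₗ[k] Module.Dual k A)
  (hbimod : ∀ a x b y : A, φ (a * x * b) y = φ x (b * y * a))
include hbimod

lemma apply_mul_left_eq (x b p : A) : φ (x * b) p = φ b (p * x) := by
  simpa only [mul_one, one_mul] using hbimod x b 1 p

lemma apply_mul_right_eq (b y p : A) : φ (b * y) p = φ b (y * p) := by
  simpa only [mul_one, one_mul] using hbimod 1 b y p

lemma apply_one_mul_comm (a w : A) : φ 1 (a * w) = φ 1 (w * a) := by
  rw [← apply_mul_right_eq φ hbimod, ← apply_mul_left_eq φ hbimod, one_mul, mul_one]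

end SymmetricForm

section Pairing

variable [Module.Free k A] [Module.Finite k A] (φ : A ≃ₗ[k] Module.Dual k A)

noncomputable def tensorPairing : A ⊗[k] A ≃ₗ[k] Module.Dual k (A ⊗[k] A) :=
  (TensorProduct.congr φ φ).trans (TensorProduct.dualDistribEquiv k A A)

lemma tensorPairing_tmul_tmul (b₁ b₂ x y : A) :
    tensorPairing φ (b₁ ⊗ₜ[k] b₂) (x ⊗ₜ[k] y) = φ b₁ x * φ b₂ y := by
  simp [tensorPairing, TensorProduct.dualDistribEquiv]

lemma tensorPairing_DeltaElem (x y : A) :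
    tensorPairing φ (DeltaElem k A φ) (x ⊗ₜ[k] y) = φ 1 (x * y) := by
  have hcongr : ∀ u : Module.Dual k A ⊗[k] Module.Dual k A,
      TensorProduct.congr φ φ (TensorProduct.map φ.symm.toLinearMap φ.symm.toLinearMap u) = u :=
    (TensorProduct.congr φ φ).apply_symm_apply
  rw [DeltaElem, tensorPairing, LinearEquiv.trans_apply, hcongr, LinearEquiv.apply_symm_apply,
    LinearMap.dualMap_apply, LinearMap.mul'_apply]

variable (hbimod : ∀ a x b y : A, φ (a * x * b) y = φ x (b * y * a))
include hbimod

lemma tensorPairing_tmul_mul (x y : A) (u : A ⊗[k] A) (p q : A) :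
    tensorPairing φ ((x ⊗ₜ[k] y) * u) (p ⊗ₜ[k] q) = tensorPairing φ u ((p * x) ⊗ₜ[k] (q * y)) := by
  induction u using TensorProduct.induction_on with
  | zero => simp
  | tmul b₁ b₂ =>
    rw [Algebra.TensorProduct.tmul_mul_tmul, tensorPairing_tmul_tmul, tensorPairing_tmul_tmul,
      apply_mul_left_eq φ hbimod, apply_mul_left_eq φ hbimod]
  | add u v hu hv => simp only [mul_add, map_add, LinearMap.add_apply, hu, hv]

lemma tensorPairing_mul_tmul (x y : A) (u : A ⊗[k] A) (p q : A) :
    tensorPairing φ (u * (x ⊗ₜ[k] y)) (p ⊗ₜ[k] q) = tensorPairing φ u ((x * p) ⊗ₜ[k] (y * q)) := by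
  induction u using TensorProduct.induction_on with
  | zero => simp
  | tmul b₁ b₂ =>
    rw [Algebra.TensorProduct.tmul_mul_tmul, tensorPairing_tmul_tmul, tensorPairing_tmul_tmul,
      apply_mul_right_eq φ hbimod, apply_mul_right_eq φ hbimod]
  | add u v hu hv => simp only [add_mul, map_add, LinearMap.add_apply, hu, hv]

lemma tmul_mul_DeltaElem (x y : A) :
    (x ⊗ₜ[k] y) * DeltaElem k A φ = DeltaElem k A φ * (y ⊗ₜ[k] x) := by
  refine (tensorPairing φ).injective (TensorProduct.ext' fun p q => ?_)
  rw [tensorPairing_tmul_mul φ hbimod, tensorPairing_mul_tmul φ hbimod, tensorPairing_DeltaElem,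
    tensorPairing_DeltaElem]
  simpa only [mul_assoc] using apply_one_mul_comm φ hbimod (p * x * q) y

end Pairing

section Slots

variable (n : ℕ)

noncomputable def slotFill (v : Fin n → A) (t u : Fin n) (h : t ≠ u) :
    A ⊗[k] A →ₗ[k] TPow k A n :=
  TensorProduct.lift <| LinearMap.mk₂ k
    (fun a b => PiTensorProduct.tprod k (Function.update (Function.update v t a) u b))
    (fun a a' b => by
      rw [Function.update_comm h, Function.update_comm h, Function.update_comm h,
        MultilinearMap.map_update_add])
    (fun c a b => by
      rw [Function.update_comm h, Function.update_comm h, MultilinearMap.map_update_smul])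
    (fun a b b' => MultilinearMap.map_update_add _ _ _ _ _)
    (fun c a b => MultilinearMap.map_update_smul _ _ _ _ _)

lemma slotFill_tmul (v : Fin n → A) (t u : Fin n) (h : t ≠ u) (a b : A) :
    slotFill n v t u h (a ⊗ₜ[k] b)
      = PiTensorProduct.tprod k (Function.update (Function.update v t a) u b) := rfl

lemma slotEmb_tmul (t u : Fin n) (h : t ≠ u) (a b : A) :
    slotEmb k A n t u h (a ⊗ₜ[k] b)
      = PiTensorProduct.tprod k
          (Function.update (Function.update (fun _ : Fin n => (1 : A)) t a) u b) := rfl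

lemma tprod_mul_slotEmb (v : Fin n → A) (t r : Fin n) (h : t ≠ r) (u : A ⊗[k] A) :
    PiTensorProduct.tprod k v * slotEmb k A n t r h u
      = slotFill n v t r h ((v t ⊗ₜ[k] v r) * u) := by
  induction u using TensorProduct.induction_on with
  | zero => simp
  | tmul b₁ b₂ =>
    rw [Algebra.TensorProduct.tmul_mul_tmul, slotEmb_tmul, slotFill_tmul,
      PiTensorProduct.tprod_mul_tprod]
    congr 1
    funext i
    simp only [Pi.mul_apply, Function.update_apply]
    split_ifs <;> simp_all
  | add u w hu hw => simp only [map_add, mul_add, hu, hw]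

lemma slotEmb_mul_tprod_comp_swap (v : Fin n → A) (t r : Fin n) (h : t ≠ r) (u : A ⊗[k] A) :
    slotEmb k A n t r h u * PiTensorProduct.tprod k (v ∘ Equiv.swap t r)
      = slotFill n v t r h (u * (v r ⊗ₜ[k] v t)) := by
  induction u using TensorProduct.induction_on with
  | zero => simp
  | tmul b₁ b₂ =>
    rw [Algebra.TensorProduct.tmul_mul_tmul, slotEmb_tmul, slotFill_tmul,
      PiTensorProduct.tprod_mul_tprod]
    congr 1
    funext i
    simp only [Pi.mul_apply, Function.comp_apply, Function.update_apply]
    split_ifs with hr ht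
    · rw [hr, Equiv.swap_apply_right]
    · rw [ht, Equiv.swap_apply_left]
    · rw [Equiv.swap_apply_of_ne_of_ne ht hr, one_mul]
  | add u w hu hw => simp only [map_add, add_mul, hu, hw]

lemma permAct_tprod (σ : Equiv.Perm (Fin n)) (v : Fin n → A) :
    permAct k A n σ (PiTensorProduct.tprod k v) = PiTensorProduct.tprod k (v ∘ σ.symm) :=
  PiTensorProduct.reindex_tprod σ v

lemma DeltaSlot_mul_permAct_swap [Module.Free k A] [Module.Finite k A]
    (φ : A ≃ₗ[k] Module.Dual k A) (hbimod : ∀ a x b y : A, φ (a * x * b) y = φ x (b * y * a))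
    (t r : Fin n) (h : t ≠ r) (a : TPow k A n) :
    DeltaSlot k A n (DeltaElem k A φ) t r h * permAct k A n (Equiv.swap t r) a
      = a * DeltaSlot k A n (DeltaElem k A φ) t r h := by
  induction a using PiTensorProduct.induction_on with
  | smul_tprod c v =>
    rw [map_smul, permAct_tprod, Equiv.symm_swap, mul_smul_comm, smul_mul_assoc, DeltaSlot,
      slotEmb_mul_tprod_comp_swap, tprod_mul_slotEmb, tmul_mul_DeltaElem φ hbimod]
  | add x y hx hy => simp only [map_add, mul_add, add_mul, hx, hy]

end Slots

section Affinization

variable (n : ℕ) (D : A ⊗[k] A)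

lemma tE_mul (a b : TPow k A n) : tE n D (a * b) = tE n D a * tE n D b := by
  simpa [tE, map_mul] using RingQuot.mkAlgHom_rel k (AffRel.t_mul (D := D) a b)

lemma sE_mul (σ τ : Equiv.Perm (Fin n)) : sE n D (σ * τ) = sE n D σ * sE n D τ := by
  simpa [sE, map_mul] using RingQuot.mkAlgHom_rel k (AffRel.s_mul (D := D) σ τ)

lemma sE_one : sE n D 1 = 1 := by
  simpa [sE] using RingQuot.mkAlgHom_rel k (AffRel.s_one (n := n) (D := D))

lemma permAct_one (a : TPow k A n) : permAct k A n 1 a = a := by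
  rw [permAct, Equiv.Perm.one_def, PiTensorProduct.reindex_refl, LinearEquiv.refl_apply]

lemma permAct_mul (σ τ : Equiv.Perm (Fin n)) (a : TPow k A n) :
    permAct k A n (σ * τ) a = permAct k A n σ (permAct k A n τ a) :=
  (PiTensorProduct.reindex_reindex τ σ a).symm

lemma sE_swap_succ_mul_tE {m : ℕ} (i : Fin m) (a : TPow k A (m + 1)) :
    sE (m + 1) D (Equiv.swap i.castSucc i.succ) * tE (m + 1) D a
      = tE (m + 1) D (permAct k A (m + 1) (Equiv.swap i.castSucc i.succ) a)
        * sE (m + 1) D (Equiv.swap i.castSucc i.succ) := by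
  have hlt : (i.castSucc : ℕ) + 1 < m + 1 := by simp
  have hsucc : (⟨(i.castSucc : ℕ) + 1, hlt⟩ : Fin (m + 1)) = i.succ := by ext; simp
  have hrel := RingQuot.mkAlgHom_rel k (AffRel.sa (D := D) i.castSucc hlt a)
  rw [hsucc] at hrel
  simpa [sE, tE, map_mul] using hrel

lemma sE_mul_tE (σ : Equiv.Perm (Fin n)) (a : TPow k A n) :
    sE n D σ * tE n D a = tE n D (permAct k A n σ a) * sE n D σ := by
  cases n with
  | zero => rw [Subsingleton.elim σ 1, permAct_one, sE_one, one_mul, mul_one]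
  | succ m =>
    have hσ : σ ∈ Submonoid.closure (Set.range fun i : Fin m => Equiv.swap i.castSucc i.succ) := by
      rw [Equiv.Perm.mclosure_swap_castSucc_succ]
      trivial
    induction hσ using Submonoid.closure_induction_left generalizing a with
    | one => rw [permAct_one, sE_one, one_mul, mul_one]
    | mul_left τ hτ σ _ ih =>
      obtain ⟨i, rfl⟩ := hτ
      rw [sE_mul, mul_assoc, ih, ← mul_assoc, sE_swap_succ_mul_tE, mul_assoc, ← sE_mul,
        permAct_mul]

end Affinization

lemma commute_tE_DeltaSlot_mul_sE_swap [Module.Free k A] [Module.Finite k A]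
    (φ : A ≃ₗ[k] Module.Dual k A) (hbimod : ∀ a x b y : A, φ (a * x * b) y = φ x (b * y * a))
    (n : ℕ) (t r : Fin n) (h : t ≠ r) (a : TPow k A n) :
    Commute (tE n (DeltaElem k A φ) (DeltaSlot k A n (DeltaElem k A φ) t r h)
        * sE n (DeltaElem k A φ) (Equiv.swap t r))
      (tE n (DeltaElem k A φ) a) := by
  rw [Commute, SemiconjBy, mul_assoc, sE_mul_tE, ← mul_assoc, ← tE_mul,
    DeltaSlot_mul_permAct_swap n φ hbimod, tE_mul, mul_assoc]

theorem stmt6_general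
    (k A : Type*) [CommRing k] [Ring A] [Algebra k A]
    [Module.Free k A] [Module.Finite k A]
    (φ : A ≃ₗ[k] Module.Dual k A)
    (hbimod : ∀ a x b y : A, φ (a * x * b) y = φ x (b * y * a))
    (n : ℕ) :
    ∀ (r : Fin n) (a : TPow k A n),
      jmEl n (DeltaElem k A φ) r * tE n (DeltaElem k A φ) a
        = tE n (DeltaElem k A φ) a * jmEl n (DeltaElem k A φ) r := by
  intro r a
  refine (Commute.neg_left (Commute.sum_left _ _ _ fun t _ => ?_)).eq
  split_ifs with htr
  · exact commute_tE_DeltaSlot_mul_sE_swap φ hbimod n t r htr.ne a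
  · exact Commute.zero_left _

theorem stmt6
    (k A : Type*) [CommRing k] [IsNoetherianRing k] [Ring A] [Algebra k A]
    [Module.Free k A] [Module.Finite k A]
    (𝒜 : ℤ → Submodule k A) [GradedAlgebra 𝒜]
    (d : ℤ)
    (φ : A ≃ₗ[k] Module.Dual k A)
    (hbimod : ∀ a x b y : A, φ (a * x * b) y = φ x (b * y * a))
    (hdeg : ∀ t s : ℤ, ∀ x ∈ 𝒜 t, ∀ y ∈ 𝒜 s, s ≠ d - t → φ x y = 0)
    (n : ℕ) :
    ∀ (r : Fin n) (a : TPow k A n),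
      jmEl n (DeltaElem k A φ) r * tE n (DeltaElem k A φ) a
        = tE n (DeltaElem k A φ) a * jmEl n (DeltaElem k A φ) r :=
  stmt6_general k A φ hbimod n
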